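/- arXiv:1305.1758 — 5 statements merged into one kernel-verified Lean document; each statement's English description precedes it below -/
import Mathlib

section
/- Let ℓ ≥ 1, let 0 < a < b, and let γ : [0,b] → [0,∞) be continuous, strictly increasing and concave with γ(0) = 0. Suppose there exists ε₀ ∈ (0,a) such that γ has a right derivative γ′(ε₀+) at ε₀ and a left derivative γ′(a−) at a, with γ′(ε₀+) > √ℓ · γ′(a−) > 0. Then c₀ := γ′(a−)/γ′(ε₀+) lies in (0, 1/√ℓ), and for all s,t ∈ [a,b] with 0 < t − s ≤ ε₀ one has γ(t) − γ(s) ≤ c₀ · γ(t − s). (In particular, Hypothesis (H0) implies Hypothesis (H1).) -/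
open Set Real

lemma concave_quot_mono {S : Set ℝ} {f : ℝ → ℝ} (hf : ConcaveOn ℝ S f)
    {x1 x2 y1 y2 : ℝ} (hx1 : x1 ∈ S) (hy2 : y2 ∈ S)
    (h11 : x1 ≤ y1) (h22 : x2 ≤ y2) (hx : x1 < x2) (hy : y1 < y2) :
    (f y2 - f y1) / (y2 - y1) ≤ (f x2 - f x1) / (x2 - x1) := by
  have key : ∀ u v w : ℝ, u ∈ S → w ∈ S → u < v → v < w →
      (f w - f v) / (w - v) ≤ (f w - f u) / (w - u) ∧
      (f w - f u) / (w - u) ≤ (f v - f u) / (v - u) := by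
    intro u v w hu hw huv hvw
    have h := hf.slope_anti_adjacent hu hw huv hvw
    have hp : (0:ℝ) < v - u := by linarith
    have hq : (0:ℝ) < w - v := by linarith
    rw [div_le_div_iff₀ hq hp] at h
    constructor
    · rw [div_le_div_iff₀ hq (by linarith : (0:ℝ) < w - u)]
      nlinarith
    · rw [div_le_div_iff₀ (by linarith : (0:ℝ) < w - u) hp]
      nlinarith
  have step1 : (f y2 - f y1) / (y2 - y1) ≤ (f y2 - f x1) / (y2 - x1) := by
    rcases eq_or_lt_of_le h11 with rfl | hlt
    · exact le_refl _
    · exact (key x1 y1 y2 hx1 hy2 hlt hy).1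
  have step2 : (f y2 - f x1) / (y2 - x1) ≤ (f x2 - f x1) / (x2 - x1) := by
    rcases eq_or_lt_of_le h22 with rfl | hlt
    · exact le_refl _
    · exact (key x1 x2 y2 hx1 hy2 hx hlt).2
  linarith


/-- Let `ℓ ≥ 1`, let `0 < a < b`, and let `γ : [0,b] → [0,∞)` be
continuous, strictly increasing and concave with `γ 0 = 0`.  Suppose there is
`ε₀ ∈ (0,a)` such that `γ` has a right derivative `Dr` at `ε₀` (within `(ε₀,∞)`) and a
left derivative `Dl` at `a` (within `(−∞,a)`) with `Dr > √ℓ · Dl > 0`.  Then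
`c₀ := Dl / Dr` lies in `(0, 1/√ℓ)`, and for all `s, t ∈ [a,b]` with `0 < t − s ≤ ε₀`
one has `γ t − γ s ≤ c₀ · γ (t − s)`. -/
theorem statement0
    (ℓ a b ε₀ Dr Dl : ℝ) (γ : ℝ → ℝ)
    (hℓ : 1 ≤ ℓ) (ha : 0 < a) (hab : a < b)
    (hγcont : ContinuousOn γ (Icc 0 b))
    (hγmono : StrictMonoOn γ (Icc 0 b))
    (hγconc : ConcaveOn ℝ (Icc 0 b) γ)
    (hγ0 : γ 0 = 0)
    (hγnonneg : ∀ r ∈ Icc 0 b, 0 ≤ γ r)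
    (hε₀ : 0 < ε₀) (hε₀a : ε₀ < a)
    (hDr : HasDerivWithinAt γ Dr (Ioi ε₀) ε₀)
    (hDl : HasDerivWithinAt γ Dl (Iio a) a)
    (hgap : Real.sqrt ℓ * Dl < Dr) (hDlpos : 0 < Dl) :
    (0 < Dl / Dr ∧ Dl / Dr < 1 / Real.sqrt ℓ) ∧
      ∀ s t : ℝ, s ∈ Icc a b → t ∈ Icc a b → 0 < t - s → t - s ≤ ε₀ →
        γ t - γ s ≤ (Dl / Dr) * γ (t - s) := by
  have hsqrt : 1 ≤ Real.sqrt ℓ := by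
    rw [show (1:ℝ) = Real.sqrt 1 by simp]
    exact Real.sqrt_le_sqrt hℓ
  have hDrpos : 0 < Dr := lt_of_le_of_lt (by nlinarith) hgap
  have hDrT := hasDerivWithinAt_iff_tendsto_slope.1 hDr
  have hDlT := hasDerivWithinAt_iff_tendsto_slope.1 hDl
  rw [Set.diff_singleton_eq_self (by simp : ε₀ ∉ Ioi ε₀)] at hDrT
  rw [Set.diff_singleton_eq_self (by simp : a ∉ Iio a)] at hDlT
  -- Dr lower-bounds γ h / h for 0 < h ≤ ε₀
  have hDrle : ∀ h : ℝ, 0 < h → h ≤ ε₀ → Dr * h ≤ γ h := by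
    intro h h0 hhe
    have hDrq : Dr ≤ γ h / h := by
      refine le_of_tendsto hDrT ?_
      filter_upwards [Ioo_mem_nhdsGT_of_mem
        (show ε₀ ∈ Ico ε₀ b from ⟨le_refl _, by linarith⟩)] with x hx
      have hq := concave_quot_mono hγconc
        (x1 := 0) (x2 := h) (y1 := ε₀) (y2 := x)
        (⟨le_refl _, by linarith⟩) (⟨by linarith [hx.1], hx.2.le⟩)
        (le_of_lt hε₀) (by linarith [hx.1]) h0 hx.1
      rw [hγ0, sub_zero, sub_zero] at hq
      rw [slope_def_field]
      exact hq
    calc Dr * h ≤ (γ h / h) * h := by nlinarith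
      _ = γ h := by field_simp
  -- Dl upper-bounds slopes on [a,b]
  have hDlge : ∀ s t : ℝ, s ∈ Icc a b → t ∈ Icc a b → 0 < t - s →
      γ t - γ s ≤ Dl * (t - s) := by
    intro s t hs ht hst
    have hq : (γ t - γ s) / (t - s) ≤ Dl := by
      refine ge_of_tendsto hDlT ?_
      filter_upwards [Ioo_mem_nhdsLT_of_mem
        (show a ∈ Ioc ε₀ a from ⟨hε₀a, le_refl _⟩)] with x hx
      have hq := concave_quot_mono hγconc
        (x1 := x) (x2 := a) (y1 := s) (y2 := t)
        (⟨by linarith [hx.1], by linarith [hx.2]⟩) ⟨by linarith [ht.1], ht.2⟩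
        (by linarith [hx.2, hs.1]) (by linarith [ht.1]) hx.2 (by linarith)
      rw [slope_def_field, show γ x - γ a = -(γ a - γ x) by ring,
        show x - a = -(a - x) by ring, neg_div_neg_eq]
      exact hq
    have h1 := mul_le_mul_of_nonneg_right hq (le_of_lt hst)
    rw [div_mul_cancel₀ _ (ne_of_gt hst)] at h1
    exact h1
  refine ⟨⟨div_pos hDlpos hDrpos, ?_⟩, ?_⟩
  · rw [div_lt_div_iff₀ hDrpos (by linarith : (0:ℝ) < Real.sqrt ℓ)]
    nlinarith
  · intro s t hs ht hst hste
    have h1 := hDlge s t hs ht hst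
    have h2 := hDrle (t - s) hst hste
    have h3 : Dl * (t - s) ≤ (Dl / Dr) * γ (t - s) := by
      rw [div_mul_eq_mul_div, le_div_iff₀ hDrpos]
      nlinarith
    linarith
end

section
/- Let 0 < a < b and let γ : [0,b] → [0,∞) be continuous, strictly increasing and concave with γ(0) = 0, and suppose lim_{r→0+} γ(r)/r = +∞ (i.e. γ′(0+) = +∞). Then for every c₀ > 0 there exists ε > 0 such that for all s,t ∈ [a,b] with 0 < t − s ≤ ε one has γ(t) − γ(s) ≤ c₀ · γ(t − s). -/
open Set Real Filter

/-- Let `0 < a < b` and let `γ : [0,b] → [0,∞)` be continuous, strictly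
increasing and concave with `γ 0 = 0`, and suppose `γ(r)/r → +∞` as `r → 0+`.  Then for
every `c₀ > 0` there is `ε > 0` such that for all `s, t ∈ [a,b]` with `0 < t − s ≤ ε` one
has `γ t − γ s ≤ c₀ · γ (t − s)`. -/
theorem statement1
    (a b : ℝ) (γ : ℝ → ℝ)
    (ha : 0 < a) (hab : a < b)
    (hγcont : ContinuousOn γ (Icc 0 b))
    (hγmono : StrictMonoOn γ (Icc 0 b))
    (hγconc : ConcaveOn ℝ (Icc 0 b) γ)
    (hγ0 : γ 0 = 0)
    (hγnonneg : ∀ r ∈ Icc 0 b, 0 ≤ γ r)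
    (hslope : Tendsto (fun r => γ r / r) (nhdsWithin 0 (Ioi 0)) atTop) :
    ∀ c₀ : ℝ, 0 < c₀ → ∃ ε > 0, ∀ s t : ℝ, s ∈ Icc a b → t ∈ Icc a b →
      0 < t - s → t - s ≤ ε → γ t - γ s ≤ c₀ * γ (t - s) := by
  intro c₀ hc₀
  set M : ℝ := γ a / a with hM
  have hev : ∀ᶠ r in nhdsWithin 0 (Ioi 0), M / c₀ ≤ γ r / r :=
    hslope.eventually_ge_atTop (M / c₀)
  rw [eventually_iff, mem_nhdsGT_iff_exists_Ioc_subset] at hev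
  obtain ⟨ε, hε, hεsub⟩ := hev
  rw [mem_Ioi] at hε
  refine ⟨ε, hε, fun s t hs ht hst hstε => ?_⟩
  have hs0 : 0 < s := lt_of_lt_of_le ha hs.1
  have hslt : s < t := by linarith
  have hsmem : s ∈ Icc (0:ℝ) b := ⟨hs0.le, hs.2⟩
  have htmem : t ∈ Icc (0:ℝ) b := ⟨by linarith, ht.2⟩
  have h0mem : (0:ℝ) ∈ Icc (0:ℝ) b := ⟨le_rfl, by linarith⟩
  -- slope(s,t) ≤ slope(0,s) = γ s / s
  have h1 : (γ t - γ s) / (t - s) ≤ (γ s - γ 0) / (s - 0) :=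
    hγconc.slope_anti_adjacent h0mem htmem hs0 hslt
  rw [hγ0, sub_zero, sub_zero] at h1
  -- γ s / s ≤ γ a / a  by concavity with γ 0 = 0
  have h2 : γ s / s ≤ M := by
    have hcomb : γ a ≥ (a / s) * γ s := by
      have hw1 : 0 ≤ a / s := by positivity
      have hw2 : 0 ≤ 1 - a / s := by
        have : a / s ≤ 1 := (div_le_one hs0).2 hs.1
        linarith
      have := hγconc.2 h0mem hsmem hw2 hw1 (by ring)
      simpa [hγ0, div_mul_cancel₀ a hs0.ne'] using this
    rw [hM, div_le_div_iff₀ hs0 ha]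
    have hsc : a / s * γ s * s = a * γ s := by field_simp
    nlinarith [hcomb, hs0]
  have hrmem : t - s ∈ Ioc 0 ε := ⟨hst, hstε⟩
  have h3 : M / c₀ ≤ γ (t - s) / (t - s) := hεsub hrmem
  have h4 : γ t - γ s ≤ M * (t - s) := by
    have h := h1.trans h2
    rwa [div_le_iff₀ hst] at h
  have h5 : M * (t - s) ≤ c₀ * γ (t - s) := by
    rw [div_le_div_iff₀ hc₀ hst] at h3
    linarith
  linarith
end

section
/- Let B satisfy the standard scalar assumptions with constant ℓ and function γ on I = [0,∞), and assume Hypothesis (H1). Then for all 0 < a < b < ∞ there exist ε > 0 and a constant c > 0 (depending only on a, b and the law of B) such that for all s,t ∈ [a,b] with 0 < |t−s| ≤ ε: γ(t)² − (E[B(s)B(t)])²/γ(s)² ≥ c · γ(|t−s|)². (The left-hand side equals the conditional variance Var(B(t) | B(s)) of the jointly Gaussian pair (B(s),B(t)); this is a two-point local nondeterminism property.) -/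
open MeasureTheory ProbabilityTheory Set Real

/-- Standard scalar assumptions (with constant `ℓ` and variance function `γ`, on the time
interval `I`): `B` is a centered Gaussian process (every finite linear combination of its
values is a centered Gaussian random variable), with almost surely continuous sample paths,
satisfying condition (e1): `(1/ℓ)·γ(|t−s|)² ≤ E[(B t − B s)²] ≤ ℓ·γ(|t−s|)²`, and
condition (e1v): `E[(B t)²] = γ(t)²`. -/
lemma sq_integrable_gaussian (v : NNReal) :
    Integrable (fun x : ℝ => x ^ 2) (gaussianReal 0 v) := by
  rcases eq_or_ne v 0 with hv | hv
  · subst hv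
    rw [gaussianReal_zero_var]
    exact (integrable_const _).congr (MeasureTheory.ae_eq_dirac (fun x : ℝ => x ^ 2)).symm
  · rw [gaussianReal_of_var_ne_zero _ hv,
      integrable_withDensity_iff (measurable_gaussianPDF _ _)
        (ae_of_all _ fun x => ENNReal.ofReal_lt_top)]
    have h := (integrable_rpow_mul_exp_neg_mul_sq (b := (2 * (v:ℝ))⁻¹)
      (by positivity) (s := 2) (by norm_num)).const_mul ((√(2 * π * (v:ℝ)))⁻¹)
    simp only [show (2:ℝ) = ((2:ℕ):ℝ) by norm_num, Real.rpow_natCast, sq_abs] at h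
    refine h.congr ?_
    filter_upwards with x
    rw [gaussianPDF, ENNReal.toReal_ofReal (gaussianPDFReal_nonneg _ _ _), gaussianPDFReal]
    have h2 : -(x - 0) ^ 2 / (2 * (v:ℝ)) = -((2 * (v:ℝ))⁻¹ * x ^ 2) := by ring
    rw [h2]
    ring_nf

structure StdScalar {Ω : Type*} [MeasurableSpace Ω] (P : Measure Ω)
    (B : ℝ → Ω → ℝ) (I : Set ℝ) (ℓ : ℝ) (γ : ℝ → ℝ) : Prop where
  meas : ∀ t ∈ I, Measurable (B t)
  gaussian : ∀ (n : ℕ) (t : Fin n → ℝ), (∀ i, t i ∈ I) → ∀ c : Fin n → ℝ,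
    ∃ v : NNReal, P.map (fun ω => ∑ i, c i * B (t i) ω) = gaussianReal 0 v
  cont : ∀ᵐ ω ∂P, ContinuousOn (fun t => B t ω) I
  e1_lower : ∀ s ∈ I, ∀ t ∈ I, (1 / ℓ) * γ |t - s| ^ 2 ≤ ∫ ω, (B t ω - B s ω) ^ 2 ∂P
  e1_upper : ∀ s ∈ I, ∀ t ∈ I, ∫ ω, (B t ω - B s ω) ^ 2 ∂P ≤ ℓ * γ |t - s| ^ 2
  e1v : ∀ t ∈ I, ∫ ω, (B t ω) ^ 2 ∂P = γ t ^ 2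

set_option maxHeartbeats 1000000 in
/-- Under the standard scalar assumptions and Hypothesis (H1), for all
`0 < a < b` there are `ε > 0` and `c > 0` such that for all `s, t ∈ [a,b]` with
`0 < |t−s| ≤ ε` one has `γ(t)² − (E[B s · B t])²/γ(s)² ≥ c·γ(|t−s|)²` (two-point local
nondeterminism: the left-hand side is the conditional variance `Var(B t | B s)`). -/
theorem statement2
    {Ω : Type*} [MeasurableSpace Ω] (P : Measure Ω) [IsProbabilityMeasure P]
    (B : ℝ → Ω → ℝ) (ℓ : ℝ) (γ : ℝ → ℝ)
    (hℓ : 1 ≤ ℓ)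
    (hγcont : ContinuousOn γ (Ici 0))
    (hγmono : StrictMonoOn γ (Ici 0))
    (hγ0 : γ 0 = 0)
    (hB : StdScalar P B (Ici 0) ℓ γ)
    (hH1 : ∀ a b : ℝ, 0 < a → a < b →
      ∃ ε > 0, ∃ c₀ : ℝ, 0 < c₀ ∧ c₀ < 1 / Real.sqrt ℓ ∧
        ∀ s t : ℝ, s ∈ Icc a b → t ∈ Icc a b → 0 < t - s → t - s ≤ ε →
          γ t - γ s ≤ c₀ * γ (t - s)) :
    ∀ a b : ℝ, 0 < a → a < b →
      ∃ ε > 0, ∃ c > 0, ∀ s t : ℝ, s ∈ Icc a b → t ∈ Icc a b →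
        0 < |t - s| → |t - s| ≤ ε →
        c * γ |t - s| ^ 2 ≤ γ t ^ 2 - (∫ ω, B s ω * B t ω ∂P) ^ 2 / γ s ^ 2 := by
  have hℓ0 : (0:ℝ) < ℓ := lt_of_lt_of_le one_pos hℓ
  have hsq : ∀ t : ℝ, 0 ≤ t → Integrable (fun ω => (B t ω) ^ 2) P := by
    intro t ht
    obtain ⟨v, hv⟩ := hB.gaussian 1 ![t] (fun i => by fin_cases i; simpa using ht) ![1]
    have hfun : (fun ω => ∑ i : Fin 1, ![(1:ℝ)] i * B (![t] i) ω) = B t := by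
      ext ω; simp
    rw [hfun] at hv
    have hg : AEStronglyMeasurable (fun x : ℝ => x ^ 2) (P.map (B t)) :=
      (measurable_id.pow_const 2).aestronglyMeasurable
    exact (integrable_map_measure hg (hB.meas t ht).aemeasurable).mp
      (hv ▸ sq_integrable_gaussian v)
  have hmul : ∀ s t : ℝ, 0 ≤ s → 0 ≤ t → Integrable (fun ω => B s ω * B t ω) P := by
    intro s t hs ht
    refine Integrable.mono' (((hsq s hs).add (hsq t ht)).div_const 2)
      ((hB.meas s hs).mul (hB.meas t ht)).aestronglyMeasurable ?_
    filter_upwards with ω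
    simp only [Pi.add_apply]
    rw [Real.norm_eq_abs, abs_mul]
    nlinarith [sq_nonneg (|B s ω| - |B t ω|), sq_abs (B s ω), sq_abs (B t ω),
      abs_nonneg (B s ω), abs_nonneg (B t ω)]
  intro a b ha hab
  obtain ⟨ε₀, hε₀, c₀, hc₀, hc₀lt, hH⟩ := hH1 a b ha hab
  have hγmone : MonotoneOn γ (Ici 0) := hγmono.monotoneOn
  have hγa : 0 < γ a := by
    have := hγmono self_mem_Ici (mem_Ici.mpr ha.le) ha
    rwa [hγ0] at this
  have hγb : 0 < γ b := lt_of_lt_of_le hγa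
    (hγmone (mem_Ici.mpr ha.le) (mem_Ici.mpr (ha.trans hab).le) hab.le)
  have hsqrtℓ : 0 < Real.sqrt ℓ := Real.sqrt_pos.mpr hℓ0
  have hlim : Filter.Tendsto γ (nhdsWithin 0 (Ici 0)) (nhds (γ 0)) :=
    hγcont 0 self_mem_Ici
  have hev : ∀ᶠ x in nhdsWithin 0 (Ici 0), γ x < γ a / Real.sqrt ℓ :=
    hlim.eventually_lt_const (by rw [hγ0]; positivity)
  rw [eventually_nhdsWithin_iff, Metric.eventually_nhds_iff] at hev
  obtain ⟨δ, hδ, hδh⟩ := hev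
  set ε₁ : ℝ := δ / 2 with hε₁def
  have hε₁ : 0 < ε₁ := by positivity
  have hγε₁ : γ ε₁ < γ a / Real.sqrt ℓ := by
    refine hδh ?_ (mem_Ici.mpr hε₁.le)
    rw [Real.dist_eq, sub_zero, abs_of_nonneg hε₁.le]
    rw [hε₁def]; linarith
  refine ⟨min ε₀ ε₁, lt_min hε₀ hε₁, ?_⟩
  have hc₀sq : c₀ ^ 2 < 1 / ℓ := by
    have h1 : c₀ ^ 2 < (1 / Real.sqrt ℓ) ^ 2 := by
      apply pow_lt_pow_left₀ hc₀lt hc₀.le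
      norm_num
    calc c₀ ^ 2 < (1 / Real.sqrt ℓ) ^ 2 := h1
      _ = 1 / ℓ := by rw [div_pow, one_pow, Real.sq_sqrt hℓ0.le]
  have hpos1 : 0 < 1 / ℓ - c₀ ^ 2 := by linarith
  refine ⟨(1 / ℓ - c₀ ^ 2) * (3 * γ a ^ 2) / (4 * γ b ^ 2), by positivity, ?_⟩
  intro s t hs ht habs hεabs
  have hs0 : (0:ℝ) ≤ s := le_trans ha.le hs.1
  have ht0 : (0:ℝ) ≤ t := le_trans ha.le ht.1
  have hγs : γ a ≤ γ s := hγmone (mem_Ici.mpr ha.le) (mem_Ici.mpr hs0) hs.1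
  have hγt : γ a ≤ γ t := hγmone (mem_Ici.mpr ha.le) (mem_Ici.mpr ht0) ht.1
  have hγsb : γ s ≤ γ b := hγmone (mem_Ici.mpr hs0) (mem_Ici.mpr (ha.trans hab).le) hs.2
  have hγspos : 0 < γ s := lt_of_lt_of_le hγa hγs
  have hγtpos : 0 < γ t := lt_of_lt_of_le hγa hγt
  have habs0 : (0:ℝ) ≤ |t - s| := abs_nonneg _
  have hγh0 : 0 ≤ γ |t - s| := by
    have := hγmone self_mem_Ici (mem_Ici.mpr habs0) habs0
    rwa [hγ0] at this
  set ρ : ℝ := ∫ ω, B s ω * B t ω ∂P with hρdef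
  set D : ℝ := ∫ ω, (B t ω - B s ω) ^ 2 ∂P with hDdef
  have hD : D = γ t ^ 2 - 2 * ρ + γ s ^ 2 := by
    have h1 : Integrable (fun ω => B t ω ^ 2 - 2 * (B s ω * B t ω)) P :=
      (hsq t ht0).sub ((hmul s t hs0 ht0).const_mul 2)
    have hexp : (fun ω => (B t ω - B s ω) ^ 2)
        = fun ω => B t ω ^ 2 - 2 * (B s ω * B t ω) + B s ω ^ 2 := by
      ext ω; ring
    rw [hDdef, hexp, integral_add h1 (hsq s hs0),
      integral_sub (hsq t ht0) ((hmul s t hs0 ht0).const_mul 2),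
      integral_const_mul, hB.e1v t (mem_Ici.mpr ht0), hB.e1v s (mem_Ici.mpr hs0), hρdef]
  have hDl : (1 / ℓ) * γ |t - s| ^ 2 ≤ D := hB.e1_lower s (mem_Ici.mpr hs0) t (mem_Ici.mpr ht0)
  have hDu : D ≤ ℓ * γ |t - s| ^ 2 := hB.e1_upper s (mem_Ici.mpr hs0) t (mem_Ici.mpr ht0)
  clear_value ρ D
  clear hρdef hDdef
  have hγhε : γ |t - s| ≤ γ ε₁ :=
    hγmone (mem_Ici.mpr habs0) (mem_Ici.mpr hε₁.le) (le_trans hεabs (min_le_right _ _))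
  have hDa : D < γ a ^ 2 := by
    have h1 : γ |t - s| < γ a / Real.sqrt ℓ := lt_of_le_of_lt hγhε hγε₁
    have h2 : ℓ * γ |t - s| ^ 2 < ℓ * (γ a / Real.sqrt ℓ) ^ 2 :=
      mul_lt_mul_of_pos_left (pow_lt_pow_left₀ h1 hγh0 (by norm_num)) hℓ0
    have h3 : ℓ * (γ a / Real.sqrt ℓ) ^ 2 = γ a ^ 2 := by
      rw [div_pow, Real.sq_sqrt hℓ0.le]
      field_simp
    linarith
  have hε0' : |t - s| ≤ ε₀ := le_trans hεabs (min_le_left _ _)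
  have hΔ : |γ t - γ s| ≤ c₀ * γ |t - s| := by
    rcases lt_trichotomy s t with h | h | h
    · have h1 : |t - s| = t - s := abs_of_pos (by linarith)
      have h2 := hH s t hs ht (by linarith) (h1 ▸ hε0')
      have h3 : γ s ≤ γ t := hγmone (mem_Ici.mpr hs0) (mem_Ici.mpr ht0) h.le
      rw [abs_of_nonneg (by linarith), h1]
      exact h2
    · exact absurd h (by intro hh; rw [hh] at habs; simp at habs)
    · have h1 : |t - s| = s - t := by rw [abs_sub_comm]; exact abs_of_pos (by linarith)
      have h2 := hH t s ht hs (by linarith) (h1 ▸ hε0')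
      have h3 : γ t ≤ γ s := hγmone (mem_Ici.mpr ht0) (mem_Ici.mpr hs0) h.le
      rw [abs_of_nonpos (by linarith), h1]
      linarith
  have hΔsq : (γ t - γ s) ^ 2 ≤ c₀ ^ 2 * γ |t - s| ^ 2 := by
    have h1 := mul_self_le_mul_self (abs_nonneg (γ t - γ s)) hΔ
    have h2 := sq_abs (γ t - γ s)
    nlinarith
  have hid : 4 * (γ t ^ 2 * γ s ^ 2 - ρ ^ 2)
      = (D - (γ t - γ s) ^ 2) * ((γ t + γ s) ^ 2 - D) := by
    have hρ : ρ = (γ t ^ 2 + γ s ^ 2 - D) / 2 := by linarith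
    rw [hρ]; ring
  have hF1 : (1 / ℓ - c₀ ^ 2) * γ |t - s| ^ 2 ≤ D - (γ t - γ s) ^ 2 := by
    have hexp : (1 / ℓ - c₀ ^ 2) * γ |t - s| ^ 2
        = 1 / ℓ * γ |t - s| ^ 2 - c₀ ^ 2 * γ |t - s| ^ 2 := by ring
    linarith
  have hF2 : 3 * γ a ^ 2 ≤ (γ t + γ s) ^ 2 - D := by
    have h7 : 2 * γ a ≤ γ t + γ s := by linarith
    have h8 : (2 * γ a) ^ 2 ≤ (γ t + γ s) ^ 2 := pow_le_pow_left₀ (by positivity) h7 2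
    have h9 : (2 * γ a) ^ 2 = 4 * γ a ^ 2 := by ring
    linarith
  have hF1pos : (0:ℝ) ≤ (1 / ℓ - c₀ ^ 2) * γ |t - s| ^ 2 := by positivity
  have hprod : ((1 / ℓ - c₀ ^ 2) * γ |t - s| ^ 2) * (3 * γ a ^ 2)
      ≤ (D - (γ t - γ s) ^ 2) * ((γ t + γ s) ^ 2 - D) :=
    mul_le_mul hF1 hF2 (by positivity) (le_trans hF1pos hF1)
  have h4 : ((1 / ℓ - c₀ ^ 2) * γ |t - s| ^ 2) * (3 * γ a ^ 2)
      ≤ 4 * (γ t ^ 2 * γ s ^ 2 - ρ ^ 2) := by linarith [hprod, hid.ge]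
  have hγsb2 : γ s ^ 2 ≤ γ b ^ 2 := pow_le_pow_left₀ hγspos.le hγsb 2
  have heq : γ t ^ 2 - ρ ^ 2 / γ s ^ 2 = (γ t ^ 2 * γ s ^ 2 - ρ ^ 2) / γ s ^ 2 := by
    field_simp
  rw [heq, le_div_iff₀ (by positivity : (0:ℝ) < γ s ^ 2)]
  have h5 : (1 / ℓ - c₀ ^ 2) * (3 * γ a ^ 2) / (4 * γ b ^ 2) * γ |t - s| ^ 2 * γ s ^ 2
      ≤ ((1 / ℓ - c₀ ^ 2) * γ |t - s| ^ 2) * (3 * γ a ^ 2) / 4 := by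
    rw [div_mul_eq_mul_div, div_mul_eq_mul_div, div_le_div_iff₀ (by positivity) (by norm_num)]
    have hX : (0:ℝ) ≤ (1 / ℓ - c₀ ^ 2) * (3 * γ a ^ 2) * γ |t - s| ^ 2 := by positivity
    have h6 := mul_le_mul_of_nonneg_left hγsb2 hX
    linarith [h6]
  linarith [h4, h5]
end

section
/- Let d ≥ 1 be an integer, T > 0, and let γ : [0,T] → [0,∞) be continuous, strictly increasing and concave with γ(0) = 0. Set v(r) := ∫_r^T γ(s)^{−d} ds for r ∈ (0,T]. Then there exist constants C > 0 and δ ∈ (0,T) such that r/γ(r)^d ≤ C · v(r) for all r ∈ (0,δ); in other words, limsup_{r→0+} (r·γ(r)^{−d})/v(r) < +∞. -/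
open Set Real

/-- Step 4 of the proof of Theorem 2.6.  For `γ : [0,T] → [0,∞)`
continuous, strictly increasing and concave with `γ 0 = 0`, and
`v(r) = ∫_r^T γ(s)^{−d} ds`, the ratio `(r/γ(r)^d)/v(r)` stays bounded as `r → 0+`:
there are `C > 0` and `δ ∈ (0,T)` with `r/γ(r)^d ≤ C·v(r)` for all `r ∈ (0,δ)`. -/
theorem statement10
    (d : ℕ) (hd : 1 ≤ d) (T : ℝ) (hT : 0 < T) (γ : ℝ → ℝ)
    (hγcont : ContinuousOn γ (Icc 0 T))
    (hγmono : StrictMonoOn γ (Icc 0 T))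
    (hγconc : ConcaveOn ℝ (Icc 0 T) γ)
    (hγ0 : γ 0 = 0) :
    ∃ C : ℝ, 0 < C ∧ ∃ δ : ℝ, 0 < δ ∧ δ < T ∧
      ∀ r : ℝ, 0 < r → r < δ →
        r / γ r ^ d ≤ C * ∫ s in r..T, 1 / γ s ^ d := by
  refine ⟨2 ^ d, by positivity, T / 2, by linarith, by linarith, ?_⟩
  intro r hr hrδ
  have h2rT : 2 * r ≤ T := by linarith
  have hpos : ∀ s ∈ Icc r T, 0 < γ s := by
    intro s hs
    have := hγmono ⟨le_rfl, hT.le⟩ ⟨by linarith [hs.1], hs.2⟩ (by linarith [hs.1])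
    rwa [hγ0] at this
  have hγr : 0 < γ r := hpos r ⟨le_rfl, by linarith⟩
  have hγ2r : 0 < γ (2 * r) := hpos _ ⟨by linarith, h2rT⟩
  -- concavity: γ(2r) ≤ 2 γ(r)
  have hconc : γ (2 * r) ≤ 2 * γ r := by
    have h := hγconc.2 (⟨le_rfl, hT.le⟩ : (0:ℝ) ∈ Icc 0 T)
      (⟨by linarith, h2rT⟩ : 2 * r ∈ Icc (0:ℝ) T)
      (by norm_num : (0:ℝ) ≤ 1/2) (by norm_num : (0:ℝ) ≤ 1/2) (by norm_num)
    simp only [smul_eq_mul, hγ0, mul_zero, zero_add] at h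
    have heq : (1/2 : ℝ) * (2 * r) = r := by ring
    rw [heq] at h
    linarith
  -- continuity / integrability of the integrand
  have hcont : ContinuousOn (fun s => 1 / γ s ^ d) (Icc r T) := by
    apply ContinuousOn.div continuousOn_const
    · exact (hγcont.mono (fun s hs => ⟨by linarith [hs.1], hs.2⟩)).pow d
    · intro s hs; exact pow_ne_zero d (hpos s hs).ne'
  have hint1 : IntervalIntegrable (fun s => 1 / γ s ^ d) MeasureTheory.volume r (2 * r) := by
    apply ContinuousOn.intervalIntegrable
    rw [Set.uIcc_of_le (by linarith)]
    exact hcont.mono (Icc_subset_Icc le_rfl h2rT)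
  have hint2 : IntervalIntegrable (fun s => 1 / γ s ^ d) MeasureTheory.volume (2 * r) T := by
    apply ContinuousOn.intervalIntegrable
    rw [Set.uIcc_of_le h2rT]
    exact hcont.mono (Icc_subset_Icc (by linarith) le_rfl)
  -- lower bound on the middle integral
  have hlow : r * (1 / γ (2 * r) ^ d) ≤ ∫ s in r..(2 * r), 1 / γ s ^ d := by
    have := intervalIntegral.integral_mono_on (by linarith : r ≤ 2 * r)
      (intervalIntegrable_const (c := 1 / γ (2 * r) ^ d)) hint1
      (fun s hs => by
        have hγs : 0 < γ s := hpos s ⟨hs.1, by linarith [hs.2]⟩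
        have hle : γ s ≤ γ (2 * r) :=
          hγmono.monotoneOn ⟨by linarith [hs.1], by linarith [hs.2]⟩
            ⟨by linarith, h2rT⟩ hs.2
        exact one_div_le_one_div_of_le (pow_pos hγs d) (pow_le_pow_left₀ hγs.le hle d))
    rw [intervalIntegral.integral_const, smul_eq_mul] at this
    have : (2 * r - r) * (1 / γ (2 * r) ^ d) ≤ ∫ s in r..(2 * r), 1 / γ s ^ d := this
    have heq : 2 * r - r = r := by ring
    rwa [heq] at this
  -- tail is nonnegative
  have htail : 0 ≤ ∫ s in (2 * r)..T, 1 / γ s ^ d := by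
    apply intervalIntegral.integral_nonneg h2rT
    intro s hs
    have := hpos s ⟨by linarith [hs.1], hs.2⟩
    positivity
  have hsplit : (∫ s in r..(2 * r), 1 / γ s ^ d) + (∫ s in (2 * r)..T, 1 / γ s ^ d)
      = ∫ s in r..T, 1 / γ s ^ d :=
    intervalIntegral.integral_add_adjacent_intervals hint1 hint2
  have hIge : r * (1 / γ (2 * r) ^ d) ≤ ∫ s in r..T, 1 / γ s ^ d := by
    rw [← hsplit]; linarith
  -- combine: r / γ r ^ d ≤ 2^d * (r / γ(2r)^d)
  have hkey : r / γ r ^ d ≤ 2 ^ d * (r * (1 / γ (2 * r) ^ d)) := by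
    have hrw : 2 ^ d * (r * (1 / γ (2 * r) ^ d)) = (2 ^ d * r) / γ (2 * r) ^ d := by ring
    rw [hrw, div_le_div_iff₀ (by positivity) (by positivity)]
    have h2d : γ (2 * r) ^ d ≤ 2 ^ d * γ r ^ d := by
      calc γ (2 * r) ^ d ≤ (2 * γ r) ^ d := pow_le_pow_left₀ hγ2r.le hconc d
        _ = 2 ^ d * γ r ^ d := mul_pow 2 (γ r) d
    nlinarith [pow_pos hγr d]
  calc r / γ r ^ d ≤ 2 ^ d * (r * (1 / γ (2 * r) ^ d)) := hkey
    _ ≤ 2 ^ d * ∫ s in r..T, 1 / γ s ^ d := by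
        apply mul_le_mul_of_nonneg_left hIge (by positivity)
end

section
/- Let d ≥ 1 be an integer, T > 0, and let γ : [0,T] → [0,∞) be continuous, strictly increasing, concave, differentiable on (0,T), with γ(0) = 0. Set v(r) := ∫_r^T γ(s)^{−d} ds, K(x) := max{1, v(γ⁻¹(x))} for x ∈ (0, γ(T)), and φ(x) := x^d/γ⁻¹(x) for x ∈ (0, γ(T)). Assume φ is non-decreasing on some interval (0,δ₀) with lim_{x→0+} φ(x) = 0, and assume the limit L := lim_{r→0+} r·γ′(r)/γ(r) exists in [0,∞). Then K and 1/φ are commensurate near 0 — that is, there exist c, C, δ > 0 with c·(1/φ(x)) ≤ K(x) ≤ C·(1/φ(x)) for all x ∈ (0,δ) — if and only if d · L > 1. -/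
open Set Real Filter

set_option maxHeartbeats 2000000

/-- Proposition 4.7.  For `γ : [0,T] → [0,∞)` continuous, strictly
increasing, concave, differentiable on `(0,T)` with `γ 0 = 0`; with
`v(r) = ∫_r^T γ(s)^{−d} ds`, `K(x) = max{1, v(γ⁻¹(x))}` and `φ(x) = x^d/γ⁻¹(x)`,
assuming `φ` is non-decreasing near `0` with `φ(0+) = 0` and that
`L = lim_{r→0+} r·γ′(r)/γ(r)` exists in `[0,∞)`:  `K` and `1/φ` are commensurate near
`0` if and only if `d·L > 1`. -/
theorem statement11
    (d : ℕ) (hd : 1 ≤ d) (T : ℝ) (hT : 0 < T) (γ γ' γinv : ℝ → ℝ) (L δ₀ : ℝ)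
    (hγcont : ContinuousOn γ (Icc 0 T))
    (hγmono : StrictMonoOn γ (Icc 0 T))
    (hγconc : ConcaveOn ℝ (Icc 0 T) γ)
    (hγdiff : ∀ r ∈ Ioo 0 T, HasDerivAt γ (γ' r) r)
    (hγ0 : γ 0 = 0)
    (hinv : Set.InvOn γinv γ (Icc 0 T) (Icc 0 (γ T)))
    -- φ is non-decreasing near 0 with limit 0 at 0+
    (hδ₀ : 0 < δ₀)
    (hφmono : MonotoneOn (fun x => x ^ d / γinv x) (Ioo 0 δ₀))
    (hφlim : Tendsto (fun x => x ^ d / γinv x) (nhdsWithin 0 (Ioi 0)) (nhds 0))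
    -- the limit L = lim_{r→0+} r·γ'(r)/γ(r) exists in [0,∞)
    (hL : 0 ≤ L)
    (hLlim : Tendsto (fun r => r * γ' r / γ r) (nhdsWithin 0 (Ioi 0)) (nhds L)) :
    (∃ c C δ : ℝ, 0 < c ∧ 0 < C ∧ 0 < δ ∧ δ ≤ γ T ∧
      ∀ x : ℝ, 0 < x → x < δ →
        c * (γinv x / x ^ d) ≤ max 1 (∫ s in (γinv x)..T, 1 / γ s ^ d) ∧
        max 1 (∫ s in (γinv x)..T, 1 / γ s ^ d) ≤ C * (γinv x / x ^ d))
    ↔ 1 < d * L := by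
  obtain ⟨e, rfl⟩ : ∃ e, d = e + 1 := ⟨d - 1, (Nat.succ_pred_eq_of_pos hd).symm⟩
  clear hd hγconc hφmono hδ₀
  -- basic positivity facts
  have hγT : 0 < γ T := by
    have h := hγmono ⟨le_rfl, hT.le⟩ ⟨hT.le, le_rfl⟩ hT
    rwa [hγ0] at h
  have hγpos : ∀ s, 0 < s → s ≤ T → 0 < γ s := by
    intro s h1 h2
    have := hγmono ⟨le_rfl, hT.le⟩ ⟨h1.le, h2⟩ h1
    rwa [hγ0] at this
  have hγle : ∀ a b, 0 ≤ a → a ≤ b → b ≤ T → γ a ≤ γ b := fun a b h1 h2 h3 =>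
    hγmono.monotoneOn ⟨h1, h2.trans h3⟩ ⟨h1.trans h2, h3⟩ h2
  -- the inverse function
  have hinv_mem : ∀ x, 0 < x → x < γ T → γinv x ∈ Ioo 0 T ∧ γ (γinv x) = x := by
    intro x hx1 hx2
    have hxm : x ∈ Icc (γ 0) (γ T) := by rw [hγ0]; exact ⟨hx1.le, hx2.le⟩
    obtain ⟨r, hr, hγr⟩ := intermediate_value_Icc hT.le hγcont hxm
    have hgr : γinv x = r := by rw [← hγr, hinv.1 hr]
    have hr0 : r ≠ 0 := by rintro rfl; rw [hγ0] at hγr; exact hx1.ne' hγr.symm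
    have hrT : r ≠ T := by rintro rfl; exact hx2.ne' hγr
    rw [hgr, hγr]
    exact ⟨⟨hr.1.lt_of_ne (Ne.symm hr0), hr.2.lt_of_ne hrT⟩, rfl⟩
  have hreflect : ∀ x b, 0 < x → x < γ T → b ∈ Icc (0:ℝ) T → x < γ b → γinv x < b := by
    intro x b hx hxT hb hxb
    obtain ⟨hm, hγx⟩ := hinv_mem x hx hxT
    by_contra hcon
    push_neg at hcon
    have := hγle b (γinv x) hb.1 hcon hm.2.le
    rw [hγx] at this
    exact absurd hxb (not_lt.2 this)
  -- the reciprocal of φ tends to +∞ at 0+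
  have hψtop : Tendsto (fun x => γinv x / x ^ (e + 1)) (nhdsWithin (0:ℝ) (Ioi 0)) atTop := by
    have hev : ∀ᶠ x in nhdsWithin (0:ℝ) (Ioi 0), x ^ (e + 1) / γinv x ∈ Ioi (0:ℝ) := by
      filter_upwards [Ioo_mem_nhdsGT_of_mem (⟨le_rfl, hγT⟩ : (0:ℝ) ∈ Ico 0 (γ T))] with x hx
      exact div_pos (pow_pos hx.1 _) (hinv_mem x hx.1 hx.2).1.1
    have h2 : Tendsto (fun x => x ^ (e + 1) / γinv x)
        (nhdsWithin (0:ℝ) (Ioi 0)) (nhdsWithin (0:ℝ) (Ioi 0)) :=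
      tendsto_nhdsWithin_iff.2 ⟨hφlim, hev⟩
    refine h2.inv_tendsto_nhdsGT_zero.congr' ?_
    filter_upwards with x
    simp [Pi.inv_apply, inv_div]
  -- the limit of (e+1) * s γ'(s)/γ(s), expressed with `deriv`
  have hqlim : Tendsto (fun s => ((e:ℝ) + 1) * (s * deriv γ s / γ s))
      (nhdsWithin (0:ℝ) (Ioi 0)) (nhds (((e:ℝ) + 1) * L)) := by
    have h1 : Tendsto (fun s => s * deriv γ s / γ s) (nhdsWithin (0:ℝ) (Ioi 0)) (nhds L) := by
      refine hLlim.congr' ?_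
      filter_upwards [Ioo_mem_nhdsGT_of_mem (⟨le_rfl, hT⟩ : (0:ℝ) ∈ Ico 0 T)] with s hs
      rw [(hγdiff s hs).deriv]
    exact h1.const_mul _
  -- helper to extract a concrete interval from an eventual statement at 0+
  have extract : ∀ P : ℝ → Prop, (∀ᶠ s in nhdsWithin (0:ℝ) (Ioi 0), P s) →
      ∃ u, 0 < u ∧ ∀ s, 0 < s → s < u → P s := by
    intro P hP
    rw [eventually_iff, mem_nhdsGT_iff_exists_Ioo_subset] at hP
    obtain ⟨u, hu, hsub⟩ := hP
    exact ⟨u, hu, fun s h1 h2 => hsub ⟨h1, h2⟩⟩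
  -- integrability of 1/γ^d
  have hIcont : ∀ a b, 0 < a → a ≤ b → b ≤ T →
      IntervalIntegrable (fun s => 1 / γ s ^ (e + 1)) MeasureTheory.volume a b := by
    intro a b ha hab hbT
    apply ContinuousOn.intervalIntegrable
    rw [uIcc_of_le hab]
    apply ContinuousOn.div continuousOn_const
    · exact (hγcont.mono (Icc_subset_Icc ha.le hbT)).pow _
    · intro s hs
      exact pow_ne_zero _ (hγpos s (ha.trans_le hs.1) (hs.2.trans hbT)).ne'
  have hInonneg : ∀ a b, 0 < a → a ≤ b → b ≤ T → 0 ≤ ∫ s in a..b, 1 / γ s ^ (e + 1) := by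
    intro a b ha hab hbT
    apply intervalIntegral.integral_nonneg hab
    intro u hu
    exact div_nonneg zero_le_one (pow_nonneg (hγpos u (ha.trans_le hu.1) (hu.2.trans hbT)).le _)
  have hsplit : ∀ a b, 0 < a → a ≤ b → b ≤ T →
      (∫ s in a..b, 1 / γ s ^ (e + 1)) + (∫ s in b..T, 1 / γ s ^ (e + 1))
        = ∫ s in a..T, 1 / γ s ^ (e + 1) := fun a b ha hab hbT =>
    intervalIntegral.integral_add_adjacent_intervals (hIcont a b ha hab hbT)
      (hIcont b T (ha.trans_le hab) hbT le_rfl)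
  -- integrability of the derivative integrand
  have hint : ∀ a b B, 0 < a → a ≤ b → b ≤ T →
      (∀ s ∈ Icc a b, |1 - ((e:ℝ) + 1) * (s * deriv γ s / γ s)| ≤ B) →
      IntervalIntegrable (fun s => (1 - ((e:ℝ) + 1) * (s * deriv γ s / γ s)) / γ s ^ (e + 1))
        MeasureTheory.volume a b := by
    intro a b B ha hab hbT hB
    rw [intervalIntegrable_iff_integrableOn_Ioc_of_le hab]
    have hγm : AEMeasurable γ (MeasureTheory.volume.restrict (Ioc a b)) := by
      have h1 : AEMeasurable γ (MeasureTheory.volume.restrict (Icc a b)) :=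
        (hγcont.mono (Icc_subset_Icc ha.le hbT)).aemeasurable measurableSet_Icc
      exact h1.mono_measure (MeasureTheory.Measure.restrict_mono Ioc_subset_Icc_self le_rfl)
    have hdm : AEMeasurable (deriv γ) (MeasureTheory.volume.restrict (Ioc a b)) :=
      (measurable_deriv γ).aemeasurable
    have hmeas : AEMeasurable
        (fun s => (1 - ((e:ℝ) + 1) * (s * deriv γ s / γ s)) / γ s ^ (e + 1))
        (MeasureTheory.volume.restrict (Ioc a b)) :=
      (aemeasurable_const.sub (((aemeasurable_id.mul hdm).div hγm).const_mul _)).div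
        (hγm.pow_const _)
    apply MeasureTheory.Integrable.mono' (MeasureTheory.integrable_const (B / γ a ^ (e + 1)))
    · exact hmeas.aestronglyMeasurable
    · apply MeasureTheory.ae_restrict_of_forall_mem measurableSet_Ioc
      intro s hs
      have hsT : s ≤ T := hs.2.trans hbT
      have hγs : 0 < γ s := hγpos s (ha.trans hs.1) hsT
      have hγa : 0 < γ a := hγpos a ha (hab.trans hbT)
      have hγas : γ a ≤ γ s := hγle a s ha.le hs.1.le hsT
      have h1 : |1 - ((e:ℝ) + 1) * (s * deriv γ s / γ s)| ≤ B := hB s ⟨hs.1.le, hs.2⟩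
      rw [Real.norm_eq_abs, abs_div, abs_of_pos (pow_pos hγs _)]
      exact div_le_div₀ (le_trans (abs_nonneg _) h1) h1 (pow_pos hγa _)
        (pow_le_pow_left₀ hγa.le hγas _)
  -- fundamental theorem of calculus for ψ(r) = r/γ(r)^d
  have FTC : ∀ a b B, 0 < a → a ≤ b → b < T →
      (∀ s ∈ Icc a b, |1 - ((e:ℝ) + 1) * (s * deriv γ s / γ s)| ≤ B) →
      (∫ s in a..b, (1 - ((e:ℝ) + 1) * (s * deriv γ s / γ s)) / γ s ^ (e + 1))
        = b / γ b ^ (e + 1) - a / γ a ^ (e + 1) := by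
    intro a b B ha hab hbT hB
    apply intervalIntegral.integral_eq_sub_of_hasDerivAt
    · intro s hs
      rw [uIcc_of_le hab] at hs
      have hs0 : 0 < s := ha.trans_le hs.1
      have hsT : s < T := lt_of_le_of_lt hs.2 hbT
      have hγs : 0 < γ s := hγpos s hs0 hsT.le
      have hder := hγdiff s ⟨hs0, hsT⟩
      have hpow : HasDerivAt (fun t => γ t ^ (e + 1))
          (((e:ℝ) + 1) * γ s ^ e * γ' s) s := by
        have := hder.fun_pow (e + 1)
        simpa using this
      have hdiv := (hasDerivAt_id s).fun_div hpow (pow_ne_zero _ hγs.ne')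
      refine hdiv.congr_deriv ?_
      rw [hder.deriv, id]
      field_simp
      ring
    · exact hint a b B ha hab hbT.le hB
  -- monotone comparison of integrals
  have hmono_le : ∀ a b B c, 0 < a → a ≤ b → b ≤ T →
      (∀ s ∈ Icc a b, |1 - ((e:ℝ) + 1) * (s * deriv γ s / γ s)| ≤ B) →
      (∀ s ∈ Icc a b, 1 - ((e:ℝ) + 1) * (s * deriv γ s / γ s) ≤ c) →
      (∫ s in a..b, (1 - ((e:ℝ) + 1) * (s * deriv γ s / γ s)) / γ s ^ (e + 1))
        ≤ c * ∫ s in a..b, 1 / γ s ^ (e + 1) := by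
    intro a b B c ha hab hbT hB hc
    rw [← intervalIntegral.integral_const_mul]
    apply intervalIntegral.integral_mono_on hab (hint a b B ha hab hbT hB)
      ((hIcont a b ha hab hbT).const_mul c)
    intro s hs
    have hγs := hγpos s (ha.trans_le hs.1) (hs.2.trans hbT)
    rw [div_eq_mul_one_div (1 - ((e:ℝ) + 1) * (s * deriv γ s / γ s)) (γ s ^ (e + 1))]
    exact mul_le_mul_of_nonneg_right (hc s hs) (one_div_nonneg.2 (pow_nonneg hγs.le _))
  have hmono_ge : ∀ a b B c, 0 < a → a ≤ b → b ≤ T →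
      (∀ s ∈ Icc a b, |1 - ((e:ℝ) + 1) * (s * deriv γ s / γ s)| ≤ B) →
      (∀ s ∈ Icc a b, c ≤ 1 - ((e:ℝ) + 1) * (s * deriv γ s / γ s)) →
      c * (∫ s in a..b, 1 / γ s ^ (e + 1))
        ≤ ∫ s in a..b, (1 - ((e:ℝ) + 1) * (s * deriv γ s / γ s)) / γ s ^ (e + 1) := by
    intro a b B c ha hab hbT hB hc
    rw [← intervalIntegral.integral_const_mul]
    apply intervalIntegral.integral_mono_on hab ((hIcont a b ha hab hbT).const_mul c)
      (hint a b B ha hab hbT hB)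
    intro s hs
    have hγs := hγpos s (ha.trans_le hs.1) (hs.2.trans hbT)
    rw [div_eq_mul_one_div (1 - ((e:ℝ) + 1) * (s * deriv γ s / γ s)) (γ s ^ (e + 1))]
    exact mul_le_mul_of_nonneg_right (hc s hs) (one_div_nonneg.2 (pow_nonneg hγs.le _))
  constructor
  · -- forward direction: commensurability implies (e+1)·L > 1
    rintro ⟨c, C, δ, hc, hC, hδ, hδT, hbound⟩
    by_contra hcon
    push_neg at hcon
    push_cast at hcon ⊢
    -- hcon : ((e:ℝ)+1) * L ≤ 1
    set ε := 1 / (2 * C) with hεdef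
    have hε : 0 < ε := by positivity
    set B := 2 + |((e:ℝ) + 1) * L| with hBdef
    have hev1 : ∀ᶠ s in nhdsWithin (0:ℝ) (Ioi 0),
        ((e:ℝ) + 1) * (s * deriv γ s / γ s) - 1 ≤ ε ∧
        |1 - ((e:ℝ) + 1) * (s * deriv γ s / γ s)| ≤ B := by
      have h1 := hqlim.eventually_lt_const (show ((e:ℝ) + 1) * L < 1 + ε by linarith)
      have h2 := Metric.tendsto_nhds.mp hqlim 1 one_pos
      filter_upwards [h1, h2] with s hs1 hs2
      rw [Real.dist_eq, abs_lt] at hs2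
      have hA1 : ((e:ℝ) + 1) * L ≤ |((e:ℝ) + 1) * L| := le_abs_self _
      have hA2 : -|((e:ℝ) + 1) * L| ≤ ((e:ℝ) + 1) * L := neg_abs_le _
      refine ⟨by linarith, ?_⟩
      rw [abs_le]
      constructor <;> [linarith; linarith]
    obtain ⟨r₁, hr₁, hP⟩ := extract _ hev1
    set t₀ := min (r₁ / 2) (T / 2) with ht₀def
    have ht₀pos : 0 < t₀ := lt_min (by linarith) (by linarith)
    have ht₀T : t₀ < T := (min_le_right _ _).trans_lt (by linarith)
    have ht₀r₁ : t₀ < r₁ := (min_le_left _ _).trans_lt (by linarith)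
    have hγt₀ : 0 < γ t₀ := hγpos t₀ ht₀pos ht₀T.le
    set x₀ := min δ (γ t₀) / 2 with hx₀def
    have hx₀pos : 0 < x₀ := by
      have := lt_min hδ hγt₀
      rw [hx₀def]; linarith
    have hx₀δ : x₀ < δ := by
      have h1 : min δ (γ t₀) ≤ δ := min_le_left _ _
      rw [hx₀def]; linarith
    have hx₀γt₀ : x₀ < γ t₀ := by
      have h1 : min δ (γ t₀) ≤ γ t₀ := min_le_right _ _
      rw [hx₀def]; linarith
    have hx₀γT : x₀ < γ T := hx₀γt₀.trans_le (hγle t₀ T ht₀pos.le ht₀T.le le_rfl)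
    obtain ⟨hbmem, hγb⟩ := hinv_mem x₀ hx₀pos hx₀γT
    set b := γinv x₀ with hbdef
    have hbt₀ : b < t₀ := hreflect x₀ t₀ hx₀pos hx₀γT ⟨ht₀pos.le, ht₀T.le⟩ hx₀γt₀
    have hbT : b < T := hbt₀.trans ht₀T
    have hγbpos : 0 < γ b := hγpos b hbmem.1 hbT.le
    -- the main estimate: ψ(a) ≤ 2 ψ(b) for all 0 < a < b
    have hmain : ∀ a, 0 < a → a < b → a / γ a ^ (e + 1) ≤ 2 * (b / γ b ^ (e + 1)) := by
      intro a ha hab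
      have hB' : ∀ s ∈ Icc a b, |1 - ((e:ℝ) + 1) * (s * deriv γ s / γ s)| ≤ B :=
        fun s hs => (hP s (ha.trans_le hs.1) (lt_of_le_of_lt hs.2 (hbt₀.trans ht₀r₁))).2
      have hcs : ∀ s ∈ Icc a b, -ε ≤ 1 - ((e:ℝ) + 1) * (s * deriv γ s / γ s) := by
        intro s hs
        have := (hP s (ha.trans_le hs.1) (lt_of_le_of_lt hs.2 (hbt₀.trans ht₀r₁))).1
        linarith
      have hge := hmono_ge a b B (-ε) ha hab.le hbT.le hB' hcs
      rw [FTC a b B ha hab.le hbT hB'] at hge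
      have hsp := hsplit a b ha hab.le hbT.le
      have hIbT : 0 ≤ ∫ s in b..T, 1 / γ s ^ (e + 1) := hInonneg b T hbmem.1 hbT.le le_rfl
      have hIab : 0 ≤ ∫ s in a..b, 1 / γ s ^ (e + 1) := hInonneg a b ha hab.le hbT.le
      have hγa : 0 < γ a := hγpos a ha (hab.le.trans hbT.le)
      have hγaδ : γ a < δ := by
        have h1 : γ a < γ b := hγmono ⟨ha.le, hab.le.trans hbT.le⟩ ⟨hbmem.1.le, hbT.le⟩ hab
        rw [hγb] at h1
        linarith
      have hgi : γinv (γ a) = a := hinv.1 ⟨ha.le, hab.le.trans hbT.le⟩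
      have hb2 := (hbound (γ a) hγa hγaδ).2
      rw [hgi] at hb2
      have hva : (∫ s in a..T, 1 / γ s ^ (e + 1)) ≤ C * (a / γ a ^ (e + 1)) :=
        le_trans (le_max_right _ _) hb2
      have hεmul : ε * (∫ s in a..T, 1 / γ s ^ (e + 1)) ≤ ε * (C * (a / γ a ^ (e + 1))) :=
        mul_le_mul_of_nonneg_left hva hε.le
      have hεC : ε * (C * (a / γ a ^ (e + 1))) = (a / γ a ^ (e + 1)) / 2 := by
        rw [hεdef]; field_simp
      have hεIbT : 0 ≤ ε * (∫ s in b..T, 1 / γ s ^ (e + 1)) := mul_nonneg hε.le hIbT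
      have hsp2 : ε * (∫ s in a..b, 1 / γ s ^ (e + 1))
          + ε * (∫ s in b..T, 1 / γ s ^ (e + 1))
          = ε * (∫ s in a..T, 1 / γ s ^ (e + 1)) := by rw [← hsp]; ring
      linarith [hge, hsp2, hεmul, hεC, hεIbT]
    -- contradiction with ψ → ∞
    obtain ⟨δ₂, hδ₂, hgt⟩ := extract _ (hψtop.eventually_gt_atTop (2 * (b / γ b ^ (e + 1))))
    set x₁ := min δ₂ (γ b) / 2 with hx₁def
    have hx₁pos : 0 < x₁ := by
      have := lt_min hδ₂ hγbpos
      rw [hx₁def]; linarith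
    have hx₁δ₂ : x₁ < δ₂ := by
      have h1 : min δ₂ (γ b) ≤ δ₂ := min_le_left _ _
      rw [hx₁def]; linarith
    have hx₁γb : x₁ < γ b := by
      have h1 : min δ₂ (γ b) ≤ γ b := min_le_right _ _
      rw [hx₁def]; linarith
    have hx₁γT : x₁ < γ T := hx₁γb.trans_le (hγle b T hbmem.1.le hbT.le le_rfl)
    obtain ⟨hamem, hγa₁⟩ := hinv_mem x₁ hx₁pos hx₁γT
    have haltb : γinv x₁ < b := hreflect x₁ b hx₁pos hx₁γT ⟨hbmem.1.le, hbT.le⟩ hx₁γb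
    have h1 := hmain (γinv x₁) hamem.1 haltb
    have h2 : 2 * (b / γ b ^ (e + 1)) < γinv x₁ / γ (γinv x₁) ^ (e + 1) := by
      rw [hγa₁]; exact hgt x₁ hx₁pos hx₁δ₂
    linarith
  · -- reverse direction: (e+1)·L > 1 implies commensurability
    intro hdl
    push_cast at hdl
    set η := (((e:ℝ) + 1) * L - 1) / 2 with hηdef
    have hη : 0 < η := by rw [hηdef]; linarith
    have hev0 : ∀ᶠ s in nhdsWithin (0:ℝ) (Ioi 0),
        |((e:ℝ) + 1) * (s * deriv γ s / γ s) - ((e:ℝ) + 1) * L| < η := by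
      have := Metric.tendsto_nhds.mp hqlim η hη
      simpa [Real.dist_eq] using this
    obtain ⟨r₀', hr₀', hP⟩ := extract _ hev0
    set r₀ := min (r₀' / 2) (T / 2) with hr₀def
    have hr₀pos : 0 < r₀ := lt_min (by linarith) (by linarith)
    have hr₀T : r₀ < T := (min_le_right _ _).trans_lt (by linarith)
    have hr₀r : r₀ < r₀' := (min_le_left _ _).trans_lt (by linarith)
    have hγr₀ : 0 < γ r₀ := hγpos r₀ hr₀pos hr₀T.le
    have hDL : ((e:ℝ) + 1) * L = 1 + 2 * η := by rw [hηdef]; ring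
    -- the key two-sided estimate
    have key : ∀ a, 0 < a → a ≤ r₀ →
        η * (∫ s in a..r₀, 1 / γ s ^ (e + 1))
          ≤ a / γ a ^ (e + 1) - r₀ / γ r₀ ^ (e + 1) ∧
        a / γ a ^ (e + 1) - r₀ / γ r₀ ^ (e + 1)
          ≤ 3 * η * (∫ s in a..r₀, 1 / γ s ^ (e + 1)) := by
      intro a ha har
      have hBs : ∀ s ∈ Icc a r₀, |1 - ((e:ℝ) + 1) * (s * deriv γ s / γ s)| ≤ 3 * η := by
        intro s hs
        have h := hP s (ha.trans_le hs.1) (lt_of_le_of_lt hs.2 hr₀r)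
        rw [abs_lt] at h
        rw [abs_le]
        constructor <;> [linarith; linarith]
      have hcs : ∀ s ∈ Icc a r₀, 1 - ((e:ℝ) + 1) * (s * deriv γ s / γ s) ≤ -η := by
        intro s hs
        have h := hP s (ha.trans_le hs.1) (lt_of_le_of_lt hs.2 hr₀r)
        rw [abs_lt] at h
        linarith
      have hcs' : ∀ s ∈ Icc a r₀, -(3 * η) ≤ 1 - ((e:ℝ) + 1) * (s * deriv γ s / γ s) := by
        intro s hs
        have h := hP s (ha.trans_le hs.1) (lt_of_le_of_lt hs.2 hr₀r)
        rw [abs_lt] at h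
        linarith
      have hle := hmono_le a r₀ (3 * η) (-η) ha har hr₀T.le hBs hcs
      have hge := hmono_ge a r₀ (3 * η) (-(3 * η)) ha har hr₀T.le hBs hcs'
      rw [FTC a r₀ (3 * η) ha har hr₀T hBs] at hle hge
      constructor <;> nlinarith [hle, hge]
    set V₀ := ∫ s in r₀..T, 1 / γ s ^ (e + 1) with hV₀def
    have hV₀nn : 0 ≤ V₀ := hInonneg r₀ T hr₀pos hr₀T.le le_rfl
    have hψr₀nn : 0 ≤ r₀ / γ r₀ ^ (e + 1) := div_nonneg hr₀pos.le (pow_nonneg hγr₀.le _)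
    obtain ⟨δ₁, hδ₁, hMδ⟩ := extract _
      (hψtop.eventually_ge_atTop (max (max 1 V₀) (2 * (r₀ / γ r₀ ^ (e + 1)))))
    refine ⟨1 / (6 * η), 1 / η + 1, min δ₁ (γ r₀), by positivity, by positivity,
      lt_min hδ₁ hγr₀, (min_le_right _ _).trans (hγle r₀ T hr₀pos.le hr₀T.le le_rfl), ?_⟩
    intro x hx hxδ
    have hxδ₁ : x < δ₁ := hxδ.trans_le (min_le_left _ _)
    have hxγr₀ : x < γ r₀ := hxδ.trans_le (min_le_right _ _)
    have hxγT : x < γ T := hxγr₀.trans_le (hγle r₀ T hr₀pos.le hr₀T.le le_rfl)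
    obtain ⟨hrmem, hγr⟩ := hinv_mem x hx hxγT
    have hrr₀ : γinv x < r₀ := hreflect x r₀ hx hxγT ⟨hr₀pos.le, hr₀T.le⟩ hxγr₀
    have hM := hMδ x hx hxδ₁
    have hψ1 : (1:ℝ) ≤ γinv x / x ^ (e + 1) :=
      le_trans (le_trans (le_max_left _ _) (le_max_left _ _)) hM
    have hV₀ψ : V₀ ≤ γinv x / x ^ (e + 1) :=
      le_trans (le_trans (le_max_right _ _) (le_max_left _ _)) hM
    have hψr₀ψ : 2 * (r₀ / γ r₀ ^ (e + 1)) ≤ γinv x / x ^ (e + 1) :=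
      le_trans (le_max_right _ _) hM
    obtain ⟨hk1, hk2⟩ := key (γinv x) hrmem.1 hrr₀.le
    rw [hγr] at hk1 hk2
    have hsp := hsplit (γinv x) r₀ hrmem.1 hrr₀.le hr₀T.le
    rw [← hV₀def] at hsp
    have hI1nn : 0 ≤ ∫ s in (γinv x)..r₀, 1 / γ s ^ (e + 1) :=
      hInonneg (γinv x) r₀ hrmem.1 hrr₀.le hr₀T.le
    constructor
    · -- lower bound
      have hstep : γinv x / x ^ (e + 1) / (6 * η) ≤ ∫ s in (γinv x)..T, 1 / γ s ^ (e + 1) := by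
        rw [div_le_iff₀ (by positivity)]
        rw [← hsp]
        nlinarith [hk2, mul_nonneg hη.le hV₀nn]
      calc 1 / (6 * η) * (γinv x / x ^ (e + 1)) = γinv x / x ^ (e + 1) / (6 * η) := by ring
        _ ≤ ∫ s in (γinv x)..T, 1 / γ s ^ (e + 1) := hstep
        _ ≤ max 1 (∫ s in (γinv x)..T, 1 / γ s ^ (e + 1)) := le_max_right _ _
    · -- upper bound
      apply max_le
      · have h1 : (1:ℝ) * (γinv x / x ^ (e + 1)) ≤ (1 / η + 1) * (γinv x / x ^ (e + 1)) := by
          apply mul_le_mul_of_nonneg_right _ (by linarith)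
          have : 0 < 1 / η := by positivity
          linarith
        linarith
      · rw [← hsp]
        rw [show (1 / η + 1 : ℝ) = (1 + η) / η from by field_simp, div_mul_eq_mul_div]
        rw [le_div_iff₀ hη]
        nlinarith [hk1, hψr₀nn, mul_le_mul_of_nonneg_left hV₀ψ hη.le]
end
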